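/- The vector v = Σ_{i=1}^{2l} ((2l-2i+1)/(2l+1)) E_θ(-1)H_i(-1)1 + Σ_{i=1}^{2l-1} E_{1,i+1}(-1)E_{i+1,2l+1}(-1)1 - (1/2)(2l-1) E_θ(-2)1 in the vacuum module V(sl_{2l+1}, -l-1/2) is fixed by the lift of the involution ν: ν(v) = v. -/
import Mathlib


noncomputable section
open TensorProduct

/-- Elementary matrix `E_{a,b}` (1-based indices). -/
def Eb (n a b : ℕ) : Matrix (Fin n) (Fin n) ℂ :=
  Matrix.of fun p q => if p.val + 1 = a ∧ q.val + 1 = b then 1 else 0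

/-- `H_i = E_{i,i} - E_{i+1,i+1}` (1-based). -/
def Hb (n i : ℕ) : Matrix (Fin n) (Fin n) ℂ := Eb n i i - Eb n (i + 1) (i + 1)

/-- The involution `ν` of `gl_{2l+1}` as a linear map. -/
def nuLin (n : ℕ) :
    Matrix (Fin n) (Fin n) ℂ →ₗ[ℂ] Matrix (Fin n) (Fin n) ℂ where
  toFun x := Matrix.of fun p q => -((-1 : ℂ) ^ (p.val + q.val)) * x q.rev p.rev
  map_add' x y := by
    ext p q
    simp [Matrix.add_apply]
    ring
  map_smul' c x := by
    ext p q
    simp [Matrix.smul_apply]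
    ring

/-- The degree-2 part of the vacuum module `V(sl_{2l+1}, k)` is the quotient of
`(g ⊗ g) × g` — where `(a ⊗ b, 0)` encodes `a(-1)b(-1)𝟙` and `(0, a)` encodes
`a(-2)𝟙` — by the reordering relations
`a(-1)b(-1)𝟙 - b(-1)a(-1)𝟙 = [a,b](-2)𝟙`.  `relVac` is the submodule of these
relations. -/
def relVac (n : ℕ) :
    Submodule ℂ ((Matrix (Fin n) (Fin n) ℂ ⊗[ℂ] Matrix (Fin n) (Fin n) ℂ) ×
      Matrix (Fin n) (Fin n) ℂ) :=
  Submodule.span ℂ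
    {w | ∃ a b : Matrix (Fin n) (Fin n) ℂ,
      w = (a ⊗ₜ[ℂ] b - b ⊗ₜ[ℂ] a, -⁅a, b⁆)}

/-- The lift of `ν` to the degree-2 part of the vacuum module:
`ν(a(-1)b(-1)𝟙) = (νa)(-1)(νb)(-1)𝟙` and `ν(a(-2)𝟙) = (νa)(-2)𝟙`. -/
def nuVac (n : ℕ) :=
  LinearMap.prodMap (TensorProduct.map (nuLin n) (nuLin n)) (nuLin n)

/-- The encoding of the singular vector
`v = Σ_{i=1}^{2l} ((2l-2i+1)/(2l+1)) E_θ(-1)H_i(-1)𝟙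
   + Σ_{i=1}^{2l-1} E_{1,i+1}(-1)E_{i+1,2l+1}(-1)𝟙 - (1/2)(2l-1) E_θ(-2)𝟙`. -/
def singVec (l : ℕ) :
    (Matrix (Fin (2 * l + 1)) (Fin (2 * l + 1)) ℂ ⊗[ℂ]
      Matrix (Fin (2 * l + 1)) (Fin (2 * l + 1)) ℂ) ×
      Matrix (Fin (2 * l + 1)) (Fin (2 * l + 1)) ℂ :=
  (∑ i ∈ Finset.Icc 1 (2 * l),
      ((2 * (l : ℂ) - 2 * (i : ℂ) + 1) / (2 * (l : ℂ) + 1)) •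
        (Eb (2 * l + 1) 1 (2 * l + 1) ⊗ₜ[ℂ] Hb (2 * l + 1) i) +
    ∑ i ∈ Finset.Icc 1 (2 * l - 1),
      Eb (2 * l + 1) 1 (i + 1) ⊗ₜ[ℂ] Eb (2 * l + 1) (i + 1) (2 * l + 1),
   -(((2 * (l : ℂ) - 1) / 2) • Eb (2 * l + 1) 1 (2 * l + 1)))

/- ### auxiliary lemmas -/

lemma negone_pow_mod (m : ℕ) : (-1 : ℂ) ^ m = (-1) ^ (m % 2) := by
  conv_lhs => rw [← Nat.div_add_mod m 2]
  rw [pow_add, pow_mul]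
  norm_num

lemma negone_pow_congr (m m' : ℕ) (h : m % 2 = m' % 2) :
    (-1 : ℂ) ^ m = (-1) ^ m' := by
  rw [negone_pow_mod m, negone_pow_mod m', h]

lemma nuLin_Eb (n a b : ℕ) (ha : 1 ≤ a) (ha' : a ≤ n) (hb : 1 ≤ b) (hb' : b ≤ n) :
    nuLin n (Eb n a b) = ((-1 : ℂ) ^ (a + b + 1)) • Eb n (n + 1 - b) (n + 1 - a) := by
  ext p q
  have hp := p.isLt
  have hq := q.isLt
  simp only [nuLin, LinearMap.coe_mk, AddHom.coe_mk, Matrix.of_apply, Eb,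
    Matrix.smul_apply, Fin.val_rev, smul_eq_mul]
  by_cases h : p.val + 1 = n + 1 - b ∧ q.val + 1 = n + 1 - a
  · have h1 : n - (q.val + 1) + 1 = a := by omega
    have h2 : n - (p.val + 1) + 1 = b := by omega
    have h3 : p.val = n - b := by omega
    have h4 : q.val = n - a := by omega
    rw [if_pos ⟨h1, h2⟩, if_pos h, h3, h4, mul_one, mul_one,
      negone_pow_congr (n - b + (n - a)) (a + b) (by omega), pow_succ]
    ring
  · have h1 : ¬(n - (q.val + 1) + 1 = a ∧ n - (p.val + 1) + 1 = b) := by omega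
    rw [if_neg h1, if_neg h]
    ring

lemma Eb_mul_same (n a b d : ℕ) (hb : 1 ≤ b) (hb' : b ≤ n) :
    Eb n a b * Eb n b d = Eb n a d := by
  ext p q
  simp only [Eb, Matrix.mul_apply, Matrix.of_apply]
  rw [Finset.sum_eq_single (⟨b - 1, by omega⟩ : Fin n)]
  · have hk : (b - 1 : ℕ) + 1 = b := by omega
    by_cases h1 : p.val + 1 = a <;> by_cases h2 : q.val + 1 = d <;>
      simp [h1, h2, hk]
  · intro k _ hk
    have : ¬ k.val + 1 = b := fun hc => hk (by ext; simp; omega)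
    simp [this]
  · intro h
    exact absurd (Finset.mem_univ _) h

lemma Eb_mul_ne (n a b c d : ℕ) (h : b ≠ c) :
    Eb n a b * Eb n c d = 0 := by
  ext p q
  simp only [Eb, Matrix.mul_apply, Matrix.of_apply, Matrix.zero_apply]
  apply Finset.sum_eq_zero
  intro k _
  by_cases h1 : k.val + 1 = b
  · have : ¬ k.val + 1 = c := by omega
    simp [this]
  · simp [h1]

lemma sum_pair {ι M N : Type*} [AddCommMonoid M] [AddCommMonoid N]
    (s : Finset ι) (f : ι → M) (g : ι → N) :
    ((∑ i ∈ s, f i, ∑ i ∈ s, g i) : M × N) = ∑ i ∈ s, (f i, g i) := by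
  refine Prod.ext ?_ ?_ <;> simp [Prod.fst_sum, Prod.snd_sum]


/-- the singular vector `v` of `V(sl_{2l+1}, -l-1/2)` is fixed by
the lift of the involution `ν`: in the degree-2 part of the vacuum module (the
quotient by `relVac`), `ν(v) = v`. -/
theorem nu_fixes_singular_vector (l : ℕ) (hl : 0 < l) :
    nuVac (2 * l + 1) (singVec l) - singVec l ∈ relVac (2 * l + 1) := by
  classical
  set n := 2 * l + 1 with hn
  set Eθ := Eb n 1 n with hEθdef
  set A : ℕ → Matrix (Fin n) (Fin n) ℂ := fun i => Eb n 1 (i + 1) with hA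
  set B : ℕ → Matrix (Fin n) (Fin n) ℂ := fun i => Eb n (i + 1) n with hB
  set c : ℕ → ℂ := fun i => (2 * (l : ℂ) - 2 * (i : ℂ) + 1) / (2 * (l : ℂ) + 1) with hc
  -- ν on the relevant matrices
  have hnuEθ : nuLin n Eθ = -Eθ := by
    rw [hEθdef, nuLin_Eb n 1 n (by omega) (by omega) (by omega) (by omega)]
    have h1 : n + 1 - n = 1 := by omega
    have h2 : n + 1 - 1 = n := by omega
    rw [h1, h2]
    have : (-1 : ℂ) ^ (1 + n + 1) = -1 := Odd.neg_one_pow ⟨l + 1, by omega⟩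
    rw [this, neg_one_smul]
  have hnuH : ∀ i ∈ Finset.Icc 1 (2 * l), nuLin n (Hb n i) = Hb n (n - i) := by
    intro i hi
    simp only [Finset.mem_Icc] at hi
    rw [Hb, map_sub,
      nuLin_Eb n i i (by omega) (by omega) (by omega) (by omega),
      nuLin_Eb n (i + 1) (i + 1) (by omega) (by omega) (by omega) (by omega)]
    have s1 : (-1 : ℂ) ^ (i + i + 1) = -1 := Odd.neg_one_pow ⟨i, by omega⟩
    have s2 : (-1 : ℂ) ^ (i + 1 + (i + 1) + 1) = -1 := Odd.neg_one_pow ⟨i + 1, by omega⟩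
    have h1 : n + 1 - (i + 1) = n - i := by omega
    have h2 : n + 1 - i = n - i + 1 := by omega
    rw [s1, s2, h1, h2, neg_one_smul, neg_one_smul, Hb]
    abel
  have hnuA : ∀ i ∈ Finset.Icc 1 (2 * l - 1),
      nuLin n (A i) = ((-1 : ℂ) ^ (i + 1)) • Eb n (n - i) n := by
    intro i hi
    simp only [Finset.mem_Icc] at hi
    rw [hA, nuLin_Eb n 1 (i + 1) (by omega) (by omega) (by omega) (by omega)]
    have h1 : n + 1 - (i + 1) = n - i := by omega
    have h2 : n + 1 - 1 = n := by omega
    rw [h1, h2]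
    congr 1
    exact negone_pow_congr _ _ (by omega)
  have hnuB : ∀ i ∈ Finset.Icc 1 (2 * l - 1),
      nuLin n (B i) = ((-1 : ℂ) ^ (i + 1)) • Eb n 1 (n - i) := by
    intro i hi
    simp only [Finset.mem_Icc] at hi
    rw [hB, nuLin_Eb n (i + 1) n (by omega) (by omega) (by omega) (by omega)]
    have h1 : n + 1 - n = 1 := by omega
    have h2 : n + 1 - (i + 1) = n - i := by omega
    rw [h1, h2]
    congr 1
    exact negone_pow_congr _ _ (by omega)
  -- the target sum
  suffices h : nuVac n (singVec l) - singVec l =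
      ∑ i ∈ Finset.Icc 1 (2 * l - 1),
        ((B i) ⊗ₜ[ℂ] (A i) - (A i) ⊗ₜ[ℂ] (B i), -⁅B i, A i⁆) by
    rw [h]
    exact Submodule.sum_mem _ fun i _ =>
      Submodule.subset_span ⟨B i, A i, rfl⟩
  rw [← sum_pair]
  have key1 : (TensorProduct.map (nuLin n) (nuLin n))
      ((singVec l).1) - (singVec l).1 =
      ∑ i ∈ Finset.Icc 1 (2 * l - 1), ((B i) ⊗ₜ[ℂ] (A i) - (A i) ⊗ₜ[ℂ] (B i)) := by
    have hS1 : (TensorProduct.map (nuLin n) (nuLin n))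
        (∑ i ∈ Finset.Icc 1 (2 * l), c i • (Eθ ⊗ₜ[ℂ] Hb n i)) =
        ∑ i ∈ Finset.Icc 1 (2 * l), c i • (Eθ ⊗ₜ[ℂ] Hb n i) := by
      rw [map_sum]
      refine Finset.sum_nbij' (fun i => n - i) (fun i => n - i) ?_ ?_ ?_ ?_ ?_
      · intro i hi; simp only [Finset.mem_Icc] at *; omega
      · intro i hi; simp only [Finset.mem_Icc] at *; omega
      · intro i hi; simp only [Finset.mem_Icc] at *; omega
      · intro i hi; simp only [Finset.mem_Icc] at *; omega
      · intro i hi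
        rw [map_smul, TensorProduct.map_tmul, hnuEθ, hnuH i hi]
        simp only [Finset.mem_Icc] at hi
        have hcast : ((n - i : ℕ) : ℂ) = 2 * (l : ℂ) + 1 - (i : ℂ) := by
          rw [hn]
          push_cast [Nat.cast_sub (by omega : i ≤ 2 * l + 1)]
          ring
        have hcc : c i • ((-Eθ) ⊗ₜ[ℂ] Hb n (n - i)) =
            c (n - i) • (Eθ ⊗ₜ[ℂ] Hb n (n - i)) := by
          rw [TensorProduct.neg_tmul, smul_neg, ← neg_smul]
          congr 1
          rw [hc]
          simp only [hcast]
          have hden : (2 * (l : ℂ) + 1) ≠ 0 := by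
            have : ((2 * l + 1 : ℕ) : ℂ) ≠ 0 := Nat.cast_ne_zero.mpr (by omega)
            push_cast at this
            convert this using 2
          field_simp
          ring
        exact hcc
    have hS2 : (TensorProduct.map (nuLin n) (nuLin n))
        (∑ i ∈ Finset.Icc 1 (2 * l - 1), (A i) ⊗ₜ[ℂ] (B i)) =
        ∑ i ∈ Finset.Icc 1 (2 * l - 1), (B i) ⊗ₜ[ℂ] (A i) := by
      rw [map_sum]
      refine Finset.sum_nbij' (fun i => 2 * l - i) (fun i => 2 * l - i) ?_ ?_ ?_ ?_ ?_
      · intro i hi; simp only [Finset.mem_Icc] at *; omega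
      · intro i hi; simp only [Finset.mem_Icc] at *; omega
      · intro i hi; simp only [Finset.mem_Icc] at *; omega
      · intro i hi; simp only [Finset.mem_Icc] at *; omega
      · intro i hi
        rw [TensorProduct.map_tmul, hnuA i hi, hnuB i hi]
        simp only [Finset.mem_Icc] at hi
        rw [← TensorProduct.smul_tmul', TensorProduct.tmul_smul, smul_smul, ← pow_add]
        have : (-1 : ℂ) ^ (i + 1 + (i + 1)) = 1 := Even.neg_one_pow ⟨i + 1, by omega⟩
        rw [this, one_smul]
        have e1 : 2 * l - i + 1 = n - i := by omega
        have e2 : n - i = 2 * l - i + 1 := by omega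
        rw [hB, hA]
        simp only [e1]
    calc (TensorProduct.map (nuLin n) (nuLin n)) ((singVec l).1) - (singVec l).1
        = (∑ i ∈ Finset.Icc 1 (2 * l), c i • (Eθ ⊗ₜ[ℂ] Hb n i) +
            ∑ i ∈ Finset.Icc 1 (2 * l - 1), (B i) ⊗ₜ[ℂ] (A i)) -
          (∑ i ∈ Finset.Icc 1 (2 * l), c i • (Eθ ⊗ₜ[ℂ] Hb n i) +
            ∑ i ∈ Finset.Icc 1 (2 * l - 1), (A i) ⊗ₜ[ℂ] (B i)) := by
          rw [show (singVec l).1 = ∑ i ∈ Finset.Icc 1 (2 * l), c i • (Eθ ⊗ₜ[ℂ] Hb n i) +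
              ∑ i ∈ Finset.Icc 1 (2 * l - 1), (A i) ⊗ₜ[ℂ] (B i) from rfl,
            map_add, hS1, hS2]
      _ = ∑ i ∈ Finset.Icc 1 (2 * l - 1), ((B i) ⊗ₜ[ℂ] (A i) - (A i) ⊗ₜ[ℂ] (B i)) := by
          rw [Finset.sum_sub_distrib]; abel
  have key2 : nuLin n ((singVec l).2) - (singVec l).2 =
      ∑ i ∈ Finset.Icc 1 (2 * l - 1), -⁅B i, A i⁆ := by
    have hbr : ∀ i ∈ Finset.Icc 1 (2 * l - 1), -⁅B i, A i⁆ = Eθ := by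
      intro i hi
      simp only [Finset.mem_Icc] at hi
      rw [Ring.lie_def, hB, hA, Eb_mul_ne n (i + 1) n 1 (i + 1) (by omega),
        Eb_mul_same n 1 (i + 1) n (by omega) (by omega)]
      rw [hEθdef]; abel
    rw [Finset.sum_congr rfl hbr, Finset.sum_const, Nat.card_Icc]
    have h2 : (singVec l).2 = -(((2 * (l : ℂ) - 1) / 2) • Eθ) := rfl
    rw [h2, map_neg, map_smul, hnuEθ, smul_neg, neg_neg]
    have hcard : (2 * l - 1 + 1 - 1) = 2 * l - 1 := by omega
    rw [hcard]
    rw [← Nat.cast_smul_eq_nsmul ℂ]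
    have : ((2 * l - 1 : ℕ) : ℂ) = 2 * (l : ℂ) - 1 := by
      push_cast [Nat.cast_sub (by omega : 1 ≤ 2 * l)]
      ring
    rw [this, sub_neg_eq_add, ← add_smul]
    congr 1
    ring
  exact Prod.ext key1 key2
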